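/- arXiv:2208.05677 — 5 statements merged into one kernel-verified Lean document; each statement's English description precedes it below -/
import Mathlib

section
/- The automorphism group of a finitely generated residually finite group contains no subgroup isomorphic to the additive group Q of rational numbers. -/
/-- A group is residually finite if every non-trivial element survives in some finite
quotient. -/
def ResiduallyFinite (G : Type*) [Group G] : Prop :=
  ∀ g : G, g ≠ 1 → ∃ (H : Type) (_ : Group H) (_ : Finite H) (φ : G →* H), φ g ≠ 1

/-!
Baumslag's argument: if `φ` moves `g`, choose a finite quotient `π : G → Q` separating `φ g`
from `g`. Precomposition makes `Aut G` act on the set `Hom(G, Q)`, which is finite because `G`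
is finitely generated, and `φ` acts nontrivially since `π ∘ φ⁻¹ ≠ π`. So `Aut G` is residually
finite. A divisible group such as `ℚ` has no nontrivial finite quotient (each element is an
`n`-th power with `n` the order of the quotient), hence it cannot embed in a residually finite
group.
-/

theorem ResiduallyFinite.groupResiduallyFinite {G : Type*} [Group G] (h : ResiduallyFinite G) :
    Group.ResiduallyFinite G :=
  Group.residuallyFinite_of_forall_exists_finite_monoidHom h

instance Multiplicative.rootableByInt {A : Type*} [AddGroup A] [DivisibleBy A ℤ] :
    RootableBy (Multiplicative A) ℤ where
  root a n := .ofAdd (DivisibleBy.div a.toAdd n)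
  root_zero a := DivisibleBy.div_zero a.toAdd
  root_cancel a hn := DivisibleBy.div_cancel a.toAdd hn

instance MonoidHom.finite_of_fg {M P : Type*} [Monoid M] [Monoid.FG M] [Monoid P] [Finite P] :
    Finite (M →* P) := by
  obtain ⟨S, hS, hSfin⟩ := Monoid.fg_iff.mp ‹Monoid.FG M›
  have := hSfin.to_subtype
  refine Finite.of_injective (fun f : M →* P => fun s : S => f s) fun f g hfg => ?_
  exact MonoidHom.eq_of_eqOn_denseM hS fun s hs => congrFun hfg ⟨s, hs⟩

@[simps]
def MulAut.precompHom (M N : Type*) [MulOneClass M] [Monoid N] :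
    MulAut M →* Equiv.Perm (M →* N) where
  toFun := MulEquiv.monoidHomCongrLeftEquiv
  map_one' := MulEquiv.monoidHomCongrLeftEquiv_refl
  map_mul' _ _ := rfl

instance Group.ResiduallyFinite.mulAut {G : Type*} [Group G] [Group.FG G]
    [Group.ResiduallyFinite G] : Group.ResiduallyFinite (MulAut G) := by
  refine Group.residuallyFinite_of_forall_exists_finite_monoidHom fun φ hφ => ?_
  obtain ⟨g, hg⟩ : ∃ g, φ g ≠ g := by
    by_contra! h
    exact hφ (MulEquiv.ext h)
  obtain ⟨N, hN⟩ := Group.exists_finiteIndexNormalSubgroup_of_residuallyFinite _ _ hg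
  refine ⟨_, _, inferInstance, MulAut.precompHom G (G ⧸ N.toSubgroup), fun hφ1 => hN ?_⟩
  have hπ := DFunLike.congr_fun (DFunLike.congr_fun hφ1 (QuotientGroup.mk' N.toSubgroup)) (φ g)
  simpa using hπ.symm

theorem MonoidHom.eq_one_of_rootableBy_of_finite {A P : Type*} [Group A] [RootableBy A ℤ]
    [Group P] [Finite P] (f : A →* P) : f = 1 := by
  ext a
  have hn : (Nat.card P : ℤ) ≠ 0 := Nat.cast_ne_zero.mpr Nat.card_pos.ne'
  rw [← RootableBy.root_cancel a hn, map_zpow, zpow_natCast, pow_card_eq_one', one_apply]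

theorem MonoidHom.eq_one_of_rootableBy {A G : Type*} [Group A] [RootableBy A ℤ] [Group G]
    [Group.ResiduallyFinite G] (f : A →* G) : f = 1 := by
  ext a
  refine Group.eq_one_iff_forall_finiteIndexNormalSubroup _ fun N => ?_
  rw [← N.mem_toSubgroup_iff, ← QuotientGroup.eq_one_iff]
  exact DFunLike.congr_fun
    ((QuotientGroup.mk' N.toSubgroup).comp f).eq_one_of_rootableBy_of_finite a

/-- The automorphism group of a finitely generated residually finite group
has no subgroup isomorphic to the additive group `ℚ`. -/
theorem stmt6 {G : Type*} [Group G] (hfg : Group.FG G) (hrf : ResiduallyFinite G) :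
    ∀ H : Subgroup (MulAut G), ¬ Nonempty (H ≃* Multiplicative ℚ) := by
  rintro H ⟨e⟩
  have := hrf.groupResiduallyFinite
  have htriv := (H.subtype.comp e.symm.toMonoidHom).eq_one_of_rootableBy
  have hone : e.symm (.ofAdd 1) = 1 := Subtype.ext (DFunLike.congr_fun htriv _)
  simpa using congrArg e hone
end

section
/- Let G be a group whose center Z(G) contains an element of prime order p. Then there exists a discontinuous surjective group homomorphism from the topological group (∏_{n ∈ N} Z/pZ) × G (with the product of the product topology and the discrete topology) onto G with the discrete topology. -/
/-!
The finitely supported functions form a proper subspace of the `ZMod p`-vector space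
`ℕ → ZMod p`, so a basis argument gives a linear functional `f` killing them but not the
constant `1`. Through `ZMod p ≃ ⟨z⟩ ≤ Z(G)` this becomes a homomorphism `χ` into the centre,
hence `(l, g) ↦ χ l * g` is a surjective homomorphism. It is not continuous: a continuous
homomorphism into a discrete group is trivial on a basic neighbourhood of `1`, i.e. on all
functions that are `1` on some finite set, and together with the finitely supported functions
these generate the whole product, on which `χ` is not trivial.
-/

/-- The topology on `(∏_{n ∈ ℕ} ℤ/pℤ) × G`: the product of the product topology on
`∏ ℤ/pℤ` (each factor discrete, i.e. with the `⊥` topology) and the given topology on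
`G`. -/
def prodTopology (p : ℕ) (G : Type*) [TopologicalSpace G] :
    TopologicalSpace ((ℕ → Multiplicative (ZMod p)) × G) :=
  @instTopologicalSpaceProd _ _
    (@Pi.topologicalSpace ℕ (fun _ => Multiplicative (ZMod p)) (fun _ => ⊥))
    inferInstance

open Function

theorem exists_linearMap_pi_hasFiniteSupport_eq_zero_one_ne_zero (K ι : Type*) [Field K]
    [Infinite ι] :
    ∃ f : (ι → K) →ₗ[K] K, (∀ x, HasFiniteSupport x → f x = 0) ∧ f 1 ≠ 0 := by
  have hone : (1 : ι → K) ∉ LinearMap.range (Finsupp.lcoeFun (R := K)) := by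
    rintro ⟨x, hx⟩
    have h : HasFiniteSupport (1 : ι → K) := hx ▸ x.hasFiniteSupport
    exact Set.infinite_univ (by simpa [HasFiniteSupport] using h)
  obtain ⟨f, hf_one, hf_range⟩ := Submodule.exists_dual_map_eq_bot_of_notMem hone inferInstance
  refine ⟨f, fun x hx => ?_, hf_one⟩
  have hmem : f x ∈ (LinearMap.range (Finsupp.lcoeFun (R := K))).map f :=
    ⟨x, ⟨Finsupp.ofSupportFinite x hx, rfl⟩, rfl⟩
  simpa [hf_range] using hmem

theorem MonoidHom.eq_one_of_continuous_of_hasFiniteMulSupport {ι M N : Type*} [Monoid M]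
    [TopologicalSpace M] [Monoid N] [TopologicalSpace N] [DiscreteTopology N]
    (f : (ι → M) →* N) (hf : Continuous f) (hfin : ∀ x, HasFiniteMulSupport x → f x = 1)
    (x : ι → M) : f x = 1 := by
  obtain ⟨I, u, hu, hsub⟩ :=
    isOpen_pi_iff.mp (hf.isOpen_preimage {1} (isOpen_discrete _)) 1 (map_one f)
  have hout : f ((I : Set ι)ᶜ.mulIndicator x) = 1 :=
    hsub fun i hi => by simpa [hi] using (hu i hi).2
  have hin : f ((I : Set ι).mulIndicator x) = 1 :=
    hfin _ (I.finite_toSet.subset Set.mulSupport_mulIndicator_subset)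
  rw [← Set.mulIndicator_self_mul_compl (I : Set ι) x, map_mul, hin, hout, one_mul]

theorem exists_injective_zmod_orderOf_monoidHom_range_eq_zpowers {G : Type*} [Group G]
    (g : G) :
    ∃ e : Multiplicative (ZMod (orderOf g)) →* G, Injective e ∧ e.range = Subgroup.zpowers g := by
  have hgen : ∀ x : Subgroup.zpowers g, x ∈ Subgroup.zpowers ⟨g, Subgroup.mem_zpowers g⟩ := by
    rintro ⟨_, k, rfl⟩
    exact ⟨k, rfl⟩
  let e₀ := zmodMulEquivOfGenerator hgen (Nat.card_zpowers g)
  refine ⟨(Subgroup.zpowers g).subtype.comp e₀.toMonoidHom,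
    Subtype.val_injective.comp e₀.injective, ?_⟩
  rw [← MonoidHom.map_range, e₀.toMonoidHom.range_eq_top_of_surjective e₀.surjective,
    ← MonoidHom.range_eq_map, Subgroup.range_subtype]

/-- If the center of `G` contains an element of prime order `p`, then there
is a discontinuous surjective group homomorphism `(∏_{n ∈ ℕ} ℤ/pℤ) × G → G`, where the
domain carries the product topology (with each `ℤ/pℤ` discrete) and `G` is discrete. -/
theorem stmt12 {G : Type*} [Group G] [TopologicalSpace G] [DiscreteTopology G]
    (p : ℕ) (hp : p.Prime) (z : G) (hz : z ∈ Subgroup.center G) (hord : orderOf z = p) :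
    ∃ φ : (ℕ → Multiplicative (ZMod p)) × G →* G,
      Function.Surjective φ ∧ ¬ @Continuous _ _ (prodTopology p G) _ φ := by
  subst hord
  have : Fact (orderOf z).Prime := ⟨hp⟩
  obtain ⟨e, he_inj, he_range⟩ := exists_injective_zmod_orderOf_monoidHom_range_eq_zpowers z
  obtain ⟨f, hf_fin, hf_one⟩ :=
    exists_linearMap_pi_hasFiniteSupport_eq_zero_one_ne_zero (ZMod (orderOf z)) ℕ
  let χ : (ℕ → Multiplicative (ZMod (orderOf z))) →* G :=
    e.comp ((AddMonoidHom.toMultiplicative f.toAddMonoidHom).comp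
      (MulEquiv.piMultiplicative _).symm.toMonoidHom)
  have hχ_central : ∀ l g, Commute (χ l) g := fun l g =>
    (Subgroup.mem_center_iff.mp (Subgroup.zpowers_le.mpr hz (he_range ▸ ⟨_, rfl⟩)) g).symm
  refine ⟨χ.noncommCoprod (MonoidHom.id G) hχ_central, fun g => ⟨(1, g), by simp⟩, fun hφ => ?_⟩
  have hχ : Continuous χ := by
    have h : Continuous fun l => χ.noncommCoprod (MonoidHom.id G) hχ_central (l, 1) :=
      hφ.comp (continuous_id.prodMk continuous_const)
    simpa using h
  have hχ_apply : ∀ l, χ l = e (.ofAdd (f fun i => (l i).toAdd)) := fun _ => rfl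
  have hχ_fin : ∀ l, HasFiniteMulSupport l → χ l = 1 := fun l hl => by
    rw [hχ_apply, hf_fin (fun i => (l i).toAdd) hl, ofAdd_zero, map_one]
  have h := χ.eq_one_of_continuous_of_hasFiniteMulSupport hχ hχ_fin (fun _ => .ofAdd 1)
  rw [hχ_apply, ← map_one e, he_inj.eq_iff, ofAdd_eq_one] at h
  exact hf_one h
end

section
/- Let n ≥ 2 and m ≥ 2, or n ≥ 1 and m ≥ 2, with G = Z^n × (Z/2Z)^m not isomorphic to Z × Z/2Z. Then the center of Aut(Z^n × (Z/2Z)^m) is the two-element group {id, ι}, where ι inverts each Z-factor and fixes the torsion part. -/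
/-!
A central automorphism `z` of `ℤⁿ × (ℤ/2)ᵐ` commutes with the transvections of both factors and
with the shears `(x, t) ↦ (x, t + φ x)`. Commuting with the transvections of `ℤⁿ` (when `n ≥ 2`)
or of `(ℤ/2)ᵐ` (when `m ≥ 2`) forces `z (eᵢ, 0) = c • (eᵢ, 0)` for a single integer `c`, and
commuting with a shear then gives `z (0, eⱼ) = c • (0, eⱼ)`. Hence `z` is multiplication by `c`,
and surjectivity forces `c = ±1`. Conversely, multiplication by an integer commutes with every
homomorphism.
-/

theorem AddAut.apply_comm_of_mem_center {A : Type*} [Add A] {z : AddAut A}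
    (hz : z ∈ AddSubgroup.center (AddAut A)) (f : AddAut A) (a : A) : z (f a) = f (z a) :=
  (DFunLike.congr_fun (AddSubgroup.mem_center_iff.mp hz f) a).symm

theorem AddAut.mem_center_of_forall_apply_eq_zsmul {A : Type*} [AddCommGroup A]
    {z : AddAut A} (c : ℤ) (hz : ∀ a, z a = c • a) : z ∈ AddSubgroup.center (AddAut A) :=
  AddSubgroup.mem_center_iff.mpr fun f ↦ by ext a; simp [hz]

@[simp]
theorem AddEquiv.prodCongr_apply {M N M' N' : Type*} [AddZeroClass M] [AddZeroClass N]
    [AddZeroClass M'] [AddZeroClass N'] (f : M ≃+ M') (g : N ≃+ N') (p : M × N) :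
    f.prodCongr g p = (f p.1, g p.2) := rfl

def AddEquiv.prodShear {A B : Type*} [AddCommGroup A] [AddCommGroup B] (φ : A →+ B) :
    A × B ≃+ A × B where
  toFun p := (p.1, p.2 + φ p.1)
  invFun p := (p.1, p.2 - φ p.1)
  left_inv p := by simp
  right_inv p := by simp
  map_add' p q := by simp only [Prod.fst_add, Prod.snd_add, map_add, Prod.mk_add_mk]; abel_nf

@[simp]
theorem AddEquiv.prodShear_apply {A B : Type*} [AddCommGroup A] [AddCommGroup B] (φ : A →+ B)
    (p : A × B) : AddEquiv.prodShear φ p = (p.1, p.2 + φ p.1) := rfl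

section Transvection

variable {ι R : Type*} [DecidableEq ι] [AddCommGroup R]

def addTransvection (i k : ι) (hik : i ≠ k) : (ι → R) ≃+ (ι → R) where
  toFun x := x + Pi.single i (x k)
  invFun x := x - Pi.single i (x k)
  left_inv x := by simp [Pi.single_eq_of_ne' hik]
  right_inv x := by simp [Pi.single_eq_of_ne' hik]
  map_add' x y := by simp only [Pi.add_apply, Pi.single_add]; abel

@[simp]
theorem addTransvection_apply (i k : ι) (hik : i ≠ k) (x : ι → R) :
    addTransvection i k hik x = x + Pi.single i (x k) := rfl

theorem eq_zero_of_forall_addTransvection_apply_eq [Nontrivial ι] {x : ι → R}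
    (hx : ∀ i k (hik : i ≠ k), addTransvection i k hik x = x) : x = 0 := by
  funext k
  obtain ⟨i, hik⟩ := exists_ne k
  simpa using congr_fun (hx i k hik) i

end Transvection

namespace IntZModTwo

variable {ι κ : Type*} {z : AddAut ((ι → ℤ) × (κ → ZMod 2))}

theorem apply_single_of_ne [DecidableEq ι] (hz : z ∈ AddSubgroup.center _) {i k : ι}
    (hik : i ≠ k) :
    z (Pi.single i 1, 0) = (Pi.single i ((z (Pi.single k 1, 0)).1 k), 0) := by
  have h := AddAut.apply_comm_of_mem_center hz
    ((addTransvection i k hik).prodCongr (AddEquiv.refl _)) (Pi.single k 1, 0)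
  have hsum : ((Pi.single k 1 + Pi.single i 1 : ι → ℤ), (0 : κ → ZMod 2)) =
      (Pi.single k 1, 0) + (Pi.single i 1, 0) := by simp
  simp only [AddEquiv.prodCongr_apply, addTransvection_apply, Pi.single_eq_same,
    AddEquiv.refl_apply, hsum, map_add] at h
  rw [eq_sub_of_add_eq' h]
  ext <;> simp

theorem snd_apply_zero_right [DecidableEq κ] [Nontrivial κ] (hz : z ∈ AddSubgroup.center _)
    (x : ι → ℤ) : (z (x, 0)).2 = 0 := by
  refine eq_zero_of_forall_addTransvection_apply_eq fun j k hjk ↦ ?_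
  have h := AddAut.apply_comm_of_mem_center hz
    ((AddEquiv.refl _).prodCongr (addTransvection j k hjk)) (x, 0)
  simp only [AddEquiv.prodCongr_apply, addTransvection_apply, Pi.zero_apply,
    Pi.single_zero, add_zero, AddEquiv.refl_apply] at h
  exact (congr_arg Prod.snd h).symm

theorem exists_apply_single_eq_zsmul [DecidableEq ι] [DecidableEq κ] [Nonempty ι]
    (hz : z ∈ AddSubgroup.center _) (hικ : Nontrivial ι ∨ Nontrivial κ) :
    ∃ c : ℤ, ∀ i, z (Pi.single i 1, 0) = c • (Pi.single i 1, 0) := by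
  obtain ⟨i₀⟩ := ‹Nonempty ι›
  refine ⟨(z (Pi.single i₀ 1, 0)).1 i₀, fun i ↦ ?_⟩
  by_cases hι : Nontrivial ι
  · have hdiag : ∀ i k, (z (Pi.single i 1, 0)).1 i = (z (Pi.single k 1, 0)).1 k := by
      intro i k
      rcases eq_or_ne i k with rfl | hik
      · rfl
      · simp [apply_single_of_ne hz hik]
    obtain ⟨k, hki⟩ := exists_ne i
    rw [apply_single_of_ne hz hki.symm, hdiag k i₀]
    ext : 1 <;> simp [← Pi.single_smul']
  · have : Subsingleton ι := not_nontrivial_iff_subsingleton.mp hι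
    have : Nontrivial κ := hικ.resolve_left hι
    obtain rfl := Subsingleton.elim i i₀
    ext k
    · obtain rfl := Subsingleton.elim k i
      simp
    · simp [snd_apply_zero_right hz]

theorem apply_zero_single_eq_zsmul [DecidableEq ι] [DecidableEq κ] [Nonempty ι]
    (hz : z ∈ AddSubgroup.center _) {c : ℤ}
    (hc : ∀ i, z (Pi.single i 1, 0) = c • (Pi.single i 1, 0)) (j : κ) :
    z (0, Pi.single j 1) = c • (0, Pi.single j 1) := by
  obtain ⟨i₀⟩ := ‹Nonempty ι›
  let φ : (ι → ℤ) →+ (κ → ZMod 2) :=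
    (AddMonoidHom.single _ j).comp ((Int.castAddHom (ZMod 2)).comp (Pi.evalAddMonoidHom _ i₀))
  have h := AddAut.apply_comm_of_mem_center hz (AddEquiv.prodShear φ) (Pi.single i₀ 1, 0)
  have hsum : ((Pi.single i₀ 1 : ι → ℤ), (0 : κ → ZMod 2) + φ (Pi.single i₀ 1)) =
      (Pi.single i₀ 1, 0) + (0, Pi.single j 1) := by simp [φ]
  rw [AddEquiv.prodShear_apply, hsum, map_add, hc] at h
  rw [← add_right_inj (c • ((Pi.single i₀ 1 : ι → ℤ), (0 : κ → ZMod 2))), h]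
  ext : 1 <;> simp [φ, ← Pi.single_smul']

theorem addMonoidHom_ext [DecidableEq ι] [DecidableEq κ] [Finite ι] [Finite κ] {M : Type*}
    [AddCommMonoid M] {f g : (ι → ℤ) × (κ → ZMod 2) →+ M}
    (h₁ : ∀ i, f (Pi.single i 1, 0) = g (Pi.single i 1, 0))
    (h₂ : ∀ j, f (0, Pi.single j 1) = g (0, Pi.single j 1)) : f = g := by
  have hl : f.comp (AddMonoidHom.inl _ _) = g.comp (AddMonoidHom.inl _ _) := by
    ext i
    exact h₁ i
  have hr : f.comp (AddMonoidHom.inr _ _) = g.comp (AddMonoidHom.inr _ _) := by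
    refine AddMonoidHom.functions_ext _ _ _ fun j t ↦ ?_
    rcases (by decide : ∀ t : ZMod 2, t = 0 ∨ t = 1) t with rfl | rfl
    · simp [Prod.mk_zero_zero]
    · exact h₂ j
  rw [← AddMonoidHom.coprod_unique f, ← AddMonoidHom.coprod_unique g, hl, hr]

theorem isUnit_of_forall_apply_eq_zsmul [DecidableEq ι] [Nonempty ι] {c : ℤ}
    (hc : ∀ g, z g = c • g) : IsUnit c := by
  obtain ⟨i₀⟩ := ‹Nonempty ι›
  obtain ⟨g, hg⟩ := z.surjective (Pi.single i₀ 1, 0)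
  rw [hc] at hg
  exact IsUnit.of_mul_eq_one (g.1 i₀) (by simpa using congr_fun (congr_arg Prod.fst hg) i₀)

theorem mem_center_iff [DecidableEq ι] [DecidableEq κ] [Finite ι] [Nonempty ι] [Finite κ]
    (hικ : Nontrivial ι ∨ Nontrivial κ) :
    z ∈ AddSubgroup.center _ ↔ ∃ c : ℤ, IsUnit c ∧ ∀ g, z g = c • g := by
  refine ⟨fun hz ↦ ?_, fun ⟨c, _, hc⟩ ↦ AddAut.mem_center_of_forall_apply_eq_zsmul c hc⟩
  obtain ⟨c, hc⟩ := exists_apply_single_eq_zsmul hz hικ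
  have hzc : z.toAddMonoidHom = c • AddMonoidHom.id _ :=
    addMonoidHom_ext (by simpa using hc) (by simpa using apply_zero_single_eq_zsmul hz hc)
  have hzc' : ∀ g, z g = c • g := fun g ↦ by simpa using DFunLike.congr_fun hzc g
  exact ⟨c, isUnit_of_forall_apply_eq_zsmul hzc', hzc'⟩

end IntZModTwo

/-- For `G = ℤⁿ × (ℤ/2ℤ)ᵐ` with `n, m ≥ 1` and `(n, m) ≠ (1, 1)`, the
center of `Aut(G)` is the two-element group `{id, ι}`, where `ι` inverts the `ℤⁿ`-factor
and fixes the torsion part. -/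
theorem stmt16 (n m : ℕ) (hn : 1 ≤ n) (hm : 1 ≤ m) (hnm : ¬(n = 1 ∧ m = 1))
    (ι : AddAut ((Fin n → ℤ) × (Fin m → ZMod 2)))
    (hι : ∀ (x : Fin n → ℤ) (t : Fin m → ZMod 2), ι (x, t) = (-x, t)) :
    (AddSubgroup.center (AddAut ((Fin n → ℤ) × (Fin m → ZMod 2))) :
      Set (AddAut ((Fin n → ℤ) × (Fin m → ZMod 2)))) = {0, ι} := by
  have : Nonempty (Fin n) := Fin.pos_iff_nonempty.mp hn
  have hnt : Nontrivial (Fin n) ∨ Nontrivial (Fin m) := by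
    simp only [Fin.nontrivial_iff_two_le]
    omega
  have hι_neg : ∀ g, ι g = (-1 : ℤ) • g := by
    rintro ⟨x, t⟩
    ext <;> simp [hι, ZMod.neg_eq_self_mod_two]
  ext z
  rw [SetLike.mem_coe, IntZModTwo.mem_center_iff hnt]
  constructor
  · rintro ⟨c, hunit, hc⟩
    rcases Int.isUnit_iff.mp hunit with rfl | rfl
    · left
      ext g : 1
      simp [hc]
    · right
      ext g : 1
      rw [hc, hι_neg]
  · rintro (rfl | rfl)
    · exact ⟨1, isUnit_one, by simp⟩
    · exact ⟨-1, isUnit_one.neg, hι_neg⟩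
end

section
/- Every torsion subgroup of GL_n(Z) is finite. -/
/-!
Reduction mod 4 is injective on a torsion subgroup of `GLₙ(ℤ)`, which therefore embeds in the
finite group `GLₙ(ℤ/4ℤ)`: the kernel of reduction is torsion-free. Indeed, if `A = 1 + N` has
prime order `p` and `4` divides every entry of `N`, the binomial theorem gives `p N = -N² Q`. So
when `2ᵏ` (with `k ≥ 2`) divides the entries of `N`, `2²ᵏ` divides those of `p N`, hence
`2²ᵏ⁻¹` and in particular `2ᵏ⁺¹` divides those of `N`; thus `N = 0`.
-/

open Polynomial in
theorem exists_one_add_pow_eq {R : Type*} [Ring R] (a : R) (p : ℕ) :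
    ∃ b : R, (1 + a) ^ p = 1 + p * a + a ^ 2 * b := by
  obtain ⟨q, hq⟩ := sq_dvd_add_pow_sub_sub (X : ℤ[X]) 1 p
  refine ⟨aeval a q, ?_⟩
  have := congrArg (aeval a) hq
  simp only [map_sub, map_pow, map_add, map_one, map_mul, map_natCast, aeval_X, one_pow,
    one_mul] at this
  rw [← this, Nat.cast_comm]
  abel

theorem Int.eq_zero_of_forall_pow_dvd {a b : ℤ} (ha : a.natAbs ≠ 1) (h : ∀ k : ℕ, a ^ k ∣ b) :
    b = 0 := by
  by_contra hb
  obtain ⟨k, hk⟩ := Int.finiteMultiplicity_iff.mpr ⟨ha, hb⟩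
  exact hk (h (k + 1))

theorem Int.two_pow_dvd_of_two_pow_succ_dvd_prime_mul {p m : ℕ} (hp : p.Prime) {x : ℤ}
    (h : 2 ^ (m + 1) ∣ (p : ℤ) * x) : 2 ^ m ∣ x := by
  rcases hp.eq_two_or_odd' with rfl | hodd
  · rw [pow_succ'] at h
    exact (mul_dvd_mul_iff_left two_ne_zero).mp h
  · have hcop : IsCoprime ((2 : ℤ) ^ (m + 1)) p :=
      IsCoprime.pow_left <| by
        exact_mod_cast Nat.isCoprime_iff_coprime.mpr (Nat.coprime_two_left.mpr hodd)
    exact (pow_dvd_pow 2 m.le_succ).trans (hcop.dvd_of_dvd_mul_left h)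

theorem Subgroup.eq_one_of_isOfFinOrder_of_forall_pow_prime_eq_one {G : Type*} [Group G]
    {K : Subgroup G} (hK : ∀ y ∈ K, ∀ p : ℕ, p.Prime → y ^ p = 1 → y = 1) {x : G} (hx : x ∈ K)
    (hfin : IsOfFinOrder x) : x = 1 := by
  by_contra hne
  obtain ⟨p, hp, hpd⟩ := Nat.exists_prime_and_dvd (mt orderOf_eq_one_iff.mp hne)
  set y := x ^ (orderOf x / p)
  have hord : orderOf y = p := orderOf_pow_orderOf_div hfin.orderOf_pos.ne' hpd
  have hy : y = 1 := hK _ (K.pow_mem hx _) p hp (by rw [← hord, pow_orderOf_eq_one])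
  exact hp.one_lt.ne' (hord.symm.trans (hy ▸ orderOf_one))

namespace Matrix

variable {ι : Type*} [Fintype ι]

theorem dvd_mul_apply_of_forall_dvd {a b : ℤ} {A B : Matrix ι ι ℤ} (hA : ∀ i j, a ∣ A i j)
    (hB : ∀ i j, b ∣ B i j) (i j : ι) : a * b ∣ (A * B) i j :=
  Finset.dvd_sum fun k _ => mul_dvd_mul (hA i k) (hB k j)

variable [DecidableEq ι]

theorem two_pow_succ_dvd_of_one_add_pow_prime_eq_one {p k : ℕ} (hp : p.Prime) (hk : 2 ≤ k)
    {N : Matrix ι ι ℤ} (hN : (1 + N) ^ p = 1) (hdvd : ∀ i j, 2 ^ k ∣ N i j) (i j : ι) :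
    2 ^ (k + 1) ∣ N i j := by
  obtain ⟨Q, hQ⟩ := exists_one_add_pow_eq N p
  have hpN : p • N = -(N ^ 2 * Q) := by
    rw [nsmul_eq_mul, eq_neg_iff_add_eq_zero, ← add_right_inj (1 : Matrix ι ι ℤ), ← add_assoc,
      ← hQ, hN, add_zero]
  have hsq : 2 ^ (2 * k) ∣ (N ^ 2 * Q) i j := by
    rw [pow_two, ← mul_one (2 ^ (2 * k)), two_mul, pow_add]
    exact dvd_mul_apply_of_forall_dvd (dvd_mul_apply_of_forall_dvd hdvd hdvd)
      (fun _ _ => one_dvd _) i j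
  have hpNij : 2 ^ (2 * k - 1 + 1) ∣ (p : ℤ) * N i j := by
    rw [Nat.sub_add_cancel (by omega), ← nsmul_eq_mul, ← smul_apply, hpN, neg_apply]
    exact hsq.neg_right
  exact (pow_dvd_pow 2 (by omega)).trans (Int.two_pow_dvd_of_two_pow_succ_dvd_prime_mul hp hpNij)

theorem eq_zero_of_one_add_pow_prime_eq_one {p : ℕ} (hp : p.Prime) {N : Matrix ι ι ℤ}
    (hN : (1 + N) ^ p = 1) (h4 : ∀ i j, 4 ∣ N i j) : N = 0 := by
  have hdvd : ∀ k i j, 2 ^ (k + 2) ∣ N i j := by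
    intro k
    induction k with
    | zero => simpa using h4
    | succ k ih => exact two_pow_succ_dvd_of_one_add_pow_prime_eq_one hp (by omega) hN ih
  ext i j
  exact Int.eq_zero_of_forall_pow_dvd (by norm_num) fun k =>
    (pow_dvd_pow 2 (k.le_add_right 2)).trans (hdvd k i j)

namespace GeneralLinearGroup

theorem map_intCastRingHom_eq_one_iff {m : ℕ} {x : GL ι ℤ} :
    map (Int.castRingHom (ZMod m)) x = 1 ↔ ∀ i j, (m : ℤ) ∣ ((x : Matrix ι ι ℤ) - 1) i j := by
  simp [GeneralLinearGroup.ext_iff, ← ZMod.intCast_zmod_eq_zero_iff_dvd, sub_eq_zero, one_apply,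
    apply_ite]

theorem eq_one_of_isOfFinOrder_of_map_zmod_four_eq_one {x : GL ι ℤ}
    (hx : map (Int.castRingHom (ZMod 4)) x = 1) (hfin : IsOfFinOrder x) : x = 1 := by
  refine Subgroup.eq_one_of_isOfFinOrder_of_forall_pow_prime_eq_one
    (K := (map (Int.castRingHom (ZMod 4))).ker) (fun y hy p hp hyp => ?_) hx hfin
  have h4 := map_intCastRingHom_eq_one_iff.mp hy
  have hyp' : (1 + ((y : Matrix ι ι ℤ) - 1)) ^ p = 1 := by
    rw [add_sub_cancel, ← Units.val_pow_eq_pow_val, hyp, Units.val_one]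
  exact Units.ext (sub_eq_zero.mp (eq_zero_of_one_add_pow_prime_eq_one hp hyp' h4))

end GeneralLinearGroup

end Matrix

/-- Every torsion subgroup of `GLₙ(ℤ)` is finite. -/
theorem stmt17 (n : ℕ) (H : Subgroup (GL (Fin n) ℤ))
    (hH : ∀ x ∈ H, IsOfFinOrder x) : Finite H := by
  let φ := (Matrix.GeneralLinearGroup.map (Int.castRingHom (ZMod 4))).comp H.subtype
  refine Finite.of_injective φ ((injective_iff_map_eq_one φ).mpr fun x hx => ?_)
  exact Subtype.ext
    (Matrix.GeneralLinearGroup.eq_one_of_isOfFinOrder_of_map_zmod_four_eq_one hx (hH x x.2))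
end

section
/- Let T be a finite abelian group whose exponent is odd (no element of order 2), and let G = Z^n × T with n ≥ 1. Then the restriction of the map ρ : Aut(G) → Aut(Z^n) × Aut(T) to the center of Aut(G) is injective. -/
/-!
A central automorphism `f` of `A × B` commutes with `(a, b) ↦ (-a, b)`, so the `B`-component
`c` of `f (a, 0)` satisfies `c = -c`; without elements of order 2 in `B` this forces `c = 0`.
Hence `f (a, b) = ((f (a, 0)).1, 0) + f (0, b)`, and when `f` also preserves the torsion factor,
`f` is recovered from the two automorphisms it induces on the factors.
-/

namespace AddAut

variable {A B : Type*} [AddCommGroup A] [AddCommGroup B]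

lemma snd_apply_inl_eq_zero_of_mem_center (hB : ∀ b : B, b + b = 0 → b = 0)
    {f : AddAut (A × B)} (hf : f ∈ AddSubgroup.center (AddAut (A × B))) (a : A) :
    (f (a, 0)).2 = 0 := by
  let ι : AddAut (A × B) := AddEquiv.prodCongr (AddEquiv.neg A) (AddEquiv.refl B)
  have hι : ∀ p, ι p = (-p.1, p.2) := fun _ => rfl
  have hcomm : ι (f (a, 0)) = f (ι (a, 0)) :=
    DFunLike.congr_fun (AddSubgroup.mem_center_iff.mp hf ι) (a, 0)
  have hneg : (f (a, 0)).2 = -(f (a, 0)).2 := by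
    have hneg_inl : ((-a, 0) : A × B) = -(a, 0) := by simp
    simpa only [hι, hneg_inl, map_neg, Prod.snd_neg] using congrArg Prod.snd hcomm
  exact hB _ (by nth_rewrite 2 [hneg]; exact add_neg_cancel _)

lemma apply_eq_of_mem_center (hB : ∀ b : B, b + b = 0 → b = 0)
    {f : AddAut (A × B)} (hf : f ∈ AddSubgroup.center (AddAut (A × B))) (a : A) (b : B) :
    f (a, b) = ((f (a, 0)).1, 0) + f (0, b) := by
  have hinl : f (a, 0) = ((f (a, 0)).1, 0) :=
    Prod.ext rfl (snd_apply_inl_eq_zero_of_mem_center hB hf a)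
  rw [← hinl, ← map_add, Prod.mk_add_mk, add_zero, zero_add]

end AddAut

theorem stmt18_general (n : ℕ) {T : Type*} [AddCommGroup T]
    (hT : ∀ t : T, t + t = 0 → t = 0)
    (ρ : AddAut ((Fin n → ℤ) × T) →+ AddAut (Fin n → ℤ) × AddAut T)
    (hρ : ∀ f : AddAut ((Fin n → ℤ) × T),
      (∀ t : T, f (0, t) = (0, (ρ f).2 t)) ∧
      (∀ x : Fin n → ℤ, (f (x, 0)).1 = (ρ f).1 x)) :
    Set.InjOn ρ (AddSubgroup.center (AddAut ((Fin n → ℤ) × T))) := by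
  have hsplit : ∀ f ∈ AddSubgroup.center (AddAut ((Fin n → ℤ) × T)), ∀ x t,
      f (x, t) = ((ρ f).1 x, (ρ f).2 t) := by
    intro f hf x t
    rw [AddAut.apply_eq_of_mem_center hT hf, (hρ f).1 t, (hρ f).2 x, Prod.mk_add_mk,
      add_zero, zero_add]
  intro f hf g hg hfg
  ext ⟨x, t⟩ : 1
  rw [hsplit f hf, hsplit g hg, hfg]

/-- For `G = ℤⁿ × T` with `n ≥ 1` and `T` finite abelian with no element of
order 2, the homomorphism `ρ : Aut(G) → Aut(ℤⁿ) × Aut(T)` (induced by the characteristic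
torsion subgroup) restricted to the center of `Aut(G)` is injective. -/
theorem stmt18 (n : ℕ) (hn : 1 ≤ n) {T : Type*} [AddCommGroup T] [Finite T]
    (hT : ∀ t : T, t + t = 0 → t = 0)
    (ρ : AddAut ((Fin n → ℤ) × T) →+ AddAut (Fin n → ℤ) × AddAut T)
    (hρ : ∀ f : AddAut ((Fin n → ℤ) × T),
      (∀ t : T, f (0, t) = (0, (ρ f).2 t)) ∧
      (∀ x : Fin n → ℤ, (f (x, 0)).1 = (ρ f).1 x)) :
    Set.InjOn ρ (AddSubgroup.center (AddAut ((Fin n → ℤ) × T))) :=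
  stmt18_general n hT ρ hρ
end
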